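/- arXiv:1303.6513 — 10 statements merged into one kernel-verified Lean document; each statement's English description precedes it below -/
import Mathlib

section
/- Let p be an odd prime and ζ_p a primitive p-th root of unity. Then 1 + ζ_p is not a p-th power in the cyclotomic field ℚ(ζ_p). -/
/-!
Let `σ` be the automorphism of `ℚ(ζ)` with `σ ζ = ζ⁻¹` (complex conjugation). Since
`σ (1 + ζ) = ζ⁻¹ (1 + ζ)`, a `p`-th root `x` of `1 + ζ` gives `(x / σ x) ^ p = ζ`, so `x / σ x`
is a primitive `p²`-th root of unity. But the roots of unity of `ℚ(ζ_p)` have order dividing `2p`.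
-/

open Polynomial

theorem IsPrimitiveRoot.ne_neg_one {R : Type*} [CommRing R] {ζ : R} {n : ℕ}
    (hζ : IsPrimitiveRoot ζ n) (hn : Odd n) (hn1 : n ≠ 1) : ζ ≠ -1 := by
  rintro rfl
  rcases (Nat.dvd_prime Nat.prime_two).mp (hζ.dvd_of_pow_eq_one 2 (by norm_num)) with rfl | rfl
  exacts [hn1 rfl, Nat.not_odd_iff_even.mpr even_two hn]

theorem IsPrimitiveRoot.of_pow_eq_of_prime_pow {M : Type*} [CommMonoid M] {p n : ℕ}
    (hp : p.Prime) {ζ y : M} (hζ : IsPrimitiveRoot ζ (p ^ (n + 1))) (hy : y ^ p = ζ) :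
    IsPrimitiveRoot y (p ^ (n + 2)) := by
  have : Fact p.Prime := ⟨hp⟩
  have hζn : ζ ^ p ^ n ≠ 1 :=
    hζ.pow_ne_one_of_pos_of_lt (pow_ne_zero n hp.ne_zero) (Nat.pow_lt_pow_succ hp.one_lt)
  refine IsPrimitiveRoot.iff_orderOf.mpr (orderOf_eq_prime_pow ?_ ?_)
  · rwa [pow_succ', pow_mul, hy]
  · rw [pow_succ', pow_mul, hy, hζ.pow_eq_one]

theorem IsCyclotomicExtension.exists_algEquiv_apply_eq_inv {n : ℕ} [NeZero n] {K L : Type*}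
    [Field K] [Field L] [Algebra K L] [IsCyclotomicExtension {n} K L]
    (hirr : Irreducible (cyclotomic n K)) :
    ∃ σ : L ≃ₐ[K] L, ∀ ζ : L, ζ ^ n = 1 → σ ζ = ζ⁻¹ := by
  refine ⟨fromZetaAut (zeta_spec n K L).inv hirr, fun ζ hζ ↦ ?_⟩
  obtain ⟨i, -, rfl⟩ := (zeta_spec n K L).eq_pow_of_pow_eq_one hζ
  rw [map_pow, fromZetaAut_spec, inv_pow]

theorem div_map_pow_eq_of_pow_eq_one_add {K F : Type*} [Field K] [FunLike F K K]
    [RingHomClass F K K] {σ : F} {ζ x : K} {n : ℕ} (hσ : σ ζ = ζ⁻¹) (hζ0 : ζ ≠ 0)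
    (hζ : 1 + ζ ≠ 0) (hx : x ^ n = 1 + ζ) : (x / σ x) ^ n = ζ := by
  have hσx : σ x ^ n = ζ⁻¹ * (1 + ζ) := by
    rw [← map_pow, hx, map_add, map_one, hσ, mul_add, inv_mul_cancel₀ hζ0, mul_one, add_comm]
  rw [div_pow, hσx, hx, div_mul_cancel_right₀ hζ, inv_inv]

theorem one_add_primitive_root_not_pth_power
    (p : ℕ) (hp : p.Prime) (hodd : Odd p)
    (ζ : CyclotomicField p ℚ) (hζ : IsPrimitiveRoot ζ p) :
    ¬ ∃ x : CyclotomicField p ℚ, x ^ p = 1 + ζ := by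
  rintro ⟨x, hx⟩
  have : NeZero p := ⟨hp.ne_zero⟩
  have : NeZero (p : ℚ) := ⟨by exact_mod_cast hp.ne_zero⟩
  -- not found by instance search, which elaborates `Algebra ℚ` as `DivisionRing.toRatAlgebra`
  have : IsCyclotomicExtension {p} ℚ (CyclotomicField p ℚ) :=
    CyclotomicField.isCyclotomicExtension p ℚ
  obtain ⟨σ, hσ⟩ := IsCyclotomicExtension.exists_algEquiv_apply_eq_inv
    (L := CyclotomicField p ℚ) (cyclotomic.irreducible_rat hp.pos)
  have hne : 1 + ζ ≠ 0 := fun h ↦ hζ.ne_neg_one hodd hp.ne_one (eq_neg_of_add_eq_zero_right h)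
  have hy := div_map_pow_eq_of_pow_eq_one_add (hσ ζ hζ.pow_eq_one) (hζ.ne_zero hp.ne_zero) hne hx
  have hζ' : IsPrimitiveRoot ζ (p ^ (0 + 1)) := by rwa [zero_add, pow_one]
  have hsq : p ^ 2 ∣ 2 * p :=
    (hζ'.of_pow_eq_of_prime_pow hp hy).dvd_of_isCyclotomicExtension p (pow_ne_zero 2 hp.ne_zero)
  have hp_dvd_two : p ∣ 2 := Nat.dvd_of_mul_dvd_mul_right hp.pos (by rwa [sq] at hsq)
  obtain rfl := (Nat.prime_dvd_prime_iff_eq hp Nat.prime_two).mp hp_dvd_two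
  exact Nat.not_odd_iff_even.mpr even_two hodd
end

section
/- Let p be an odd prime and f(z) = z^p + c with c a positive integer. Then for all n ≥ 2, the integer f^n(0) is not a p-th power in ℤ. -/
lemma aux_pow_lb (a : ℤ) (ha : 0 ≤ a) :
    ∀ p : ℕ, 2 ≤ p → a ^ p + p * a ≤ (a + 1) ^ p := by
  intro p
  induction p with
  | zero => omega
  | succ q ih =>
    intro hq
    rcases Nat.lt_or_ge q 2 with h | h
    · interval_cases q
      · omega
      · push_cast; ring_nf; nlinarith [sq_nonneg a]
    · have h1 := ih h
      have h2 : (0:ℤ) ≤ a + 1 := by linarith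
      have h3 : a ≤ a ^ 2 := by nlinarith
      have hq' : (2:ℤ) ≤ (q:ℤ) := by exact_mod_cast h
      have haq : (0:ℤ) ≤ a ^ q := pow_nonneg ha q
      calc a ^ (q+1) + (↑(q+1):ℤ) * a
          ≤ (a ^ q + q * a) * (a + 1) := by
            push_cast
            nlinarith [mul_nonneg (by linarith : (0:ℤ) ≤ (q:ℤ) - 2) (sq_nonneg a), h3, haq, pow_succ a q]
        _ ≤ (a + 1) ^ q * (a + 1) := by
            apply mul_le_mul_of_nonneg_right h1 h2
        _ = (a + 1) ^ (q + 1) := by ring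

theorem orbit_not_pth_power
    (p : ℕ) (hp : p.Prime) (hodd : Odd p) (c : ℤ) (hc : 0 < c)
    (n : ℕ) (hn : 2 ≤ n) :
    ¬ ∃ m : ℤ, (fun z : ℤ => z ^ p + c)^[n] 0 = m ^ p := by
  rintro ⟨m, hm⟩
  set F : ℤ → ℤ := fun z => z ^ p + c with hF
  have hp3 : 3 ≤ p := by
    rcases hodd with ⟨k, hk⟩
    have := hp.two_le
    omega
  -- orbit lower bound
  have horb : ∀ k : ℕ, 1 ≤ k → c ≤ F^[k] 0 := by
    intro k
    induction k with
    | zero => omega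
    | succ j ih =>
      intro _
      rw [Function.iterate_succ_apply']
      rcases Nat.eq_zero_or_pos j with h | h
      · simp [h, hF, zero_pow hp.ne_zero]
      · have hj := ih h
        have : (0:ℤ) ≤ (F^[j] 0) ^ p := pow_nonneg (by linarith) p
        simp only [hF]
        linarith
  set a : ℤ := F^[n-1] 0 with ha
  have hac : c ≤ a := horb (n-1) (by omega)
  have ha0 : 0 < a := lt_of_lt_of_le hc hac
  have hiter : F^[n] 0 = a ^ p + c := by
    have : n = (n-1) + 1 := by omega
    rw [this, Function.iterate_succ_apply']
  rw [hiter] at hm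
  -- m > a
  have hlt : a < m := by
    have h1 : a ^ p < m ^ p := by rw [← hm]; linarith
    have hmpos : 0 < m ^ p := by
      rw [← hm]; have := pow_pos ha0 p; linarith
    have hm0 : 0 ≤ m := by
      by_contra h
      push_neg at h
      have := hodd.pow_neg h
      linarith
    exact lt_of_pow_lt_pow_left₀ p hm0 h1
  have hm1 : a + 1 ≤ m := hlt
  have hmono : (a + 1) ^ p ≤ m ^ p :=
    pow_le_pow_left₀ (by linarith) hm1 p
  have hlb := aux_pow_lb a (le_of_lt ha0) p (by omega)
  have hpa : 3 * c ≤ (p:ℤ) * a := by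
    have : (3:ℤ) ≤ (p:ℤ) := by exact_mod_cast hp3
    nlinarith
  linarith [hm ▸ hmono]
end

section
/- Let p be an odd prime. If an integer y is not a p-th power in ℤ, then y is not a p-th power in the cyclotomic field ℚ(ζ_p). -/
/-!
If `x ^ p = y` in `ℚ(ζ_p)`, then `x` is a root of `X ^ p - y`, which is irreducible over `ℚ`
because `y` is not a `p`-th power in `ℚ` (`ℤ` is integrally closed). So `x` has degree `p`
over `ℚ`, and `p` would divide `[ℚ(ζ_p) : ℚ] = p - 1`.
-/

open Polynomial Module

theorem IsIntegrallyClosed.exists_pow_eq_of_pow_eq_algebraMap {R K : Type*} [CommRing R]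
    [CommRing K] [Algebra R K] [IsFractionRing R K] [IsIntegrallyClosed R] {n : ℕ} (hn : n ≠ 0)
    {a : R} {b : K} (hb : b ^ n = algebraMap R K a) : ∃ m : R, m ^ n = a := by
  have hint : IsIntegral R b := .of_pow (Nat.pos_of_ne_zero hn) (hb ▸ isIntegral_algebraMap)
  obtain ⟨m, rfl⟩ := IsIntegrallyClosed.isIntegral_iff.mp hint
  exact ⟨m, IsFractionRing.injective R K (by rwa [map_pow])⟩

theorem pow_ne_algebraMap_of_not_dvd_finrank {K L : Type*} [Field K] [Field L] [Algebra K L]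
    {p : ℕ} (hp : p.Prime) {a : K} (ha : ∀ b : K, b ^ p ≠ a) (hdvd : ¬ p ∣ finrank K L) (x : L) :
    x ^ p ≠ algebraMap K L a := by
  intro hx
  have hmonic : (X ^ p - C a).Monic := monic_X_pow_sub_C a hp.ne_zero
  have hroot : aeval x (X ^ p - C a) = 0 := by simp [hx]
  have hmin : X ^ p - C a = minpoly K x :=
    minpoly.eq_of_irreducible_of_monic (X_pow_sub_C_irreducible_of_prime hp ha) hroot hmonic
  have hint : IsIntegral K x := ⟨_, hmonic, hroot⟩
  apply hdvd
  simpa [← hmin, natDegree_X_pow_sub_C] using minpoly.degree_dvd hint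

theorem finrank_cyclotomicField_rat (n : ℕ) [NeZero n] :
    finrank ℚ (CyclotomicField n ℚ) = n.totient :=
  -- Instance search finds `DivisionRing.toRatAlgebra`, not the `CyclotomicField.algebra` for
  -- which the `IsCyclotomicExtension` instance is stated; the two agree only up to unfolding.
  @IsCyclotomicExtension.finrank n _ ℚ (CyclotomicField n ℚ) _ _ _ _
    (CyclotomicField.isCyclotomicExtension n ℚ) (cyclotomic.irreducible_rat (Nat.pos_of_neZero n))

theorem not_pth_power_in_cyclotomic_general
    (p : ℕ) (hp : p.Prime) (y : ℤ)
    (hy : ¬ ∃ m : ℤ, y = m ^ p) :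
    ¬ ∃ x : CyclotomicField p ℚ, (y : CyclotomicField p ℚ) = x ^ p := by
  have hyℚ : ∀ b : ℚ, b ^ p ≠ y := fun b hb => hy <|
    (IsIntegrallyClosed.exists_pow_eq_of_pow_eq_algebraMap hp.ne_zero hb).imp fun _ => Eq.symm
  have hdvd : ¬ p ∣ finrank ℚ (CyclotomicField p ℚ) := by
    have : NeZero p := ⟨hp.ne_zero⟩
    rw [finrank_cyclotomicField_rat, Nat.totient_prime hp]
    exact Nat.not_dvd_of_pos_of_lt (Nat.sub_pos_of_lt hp.one_lt) (Nat.sub_lt hp.pos one_pos)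
  rintro ⟨x, hx⟩
  exact pow_ne_algebraMap_of_not_dvd_finrank hp hyℚ hdvd x (by rw [← hx, map_intCast])

theorem not_pth_power_in_cyclotomic
    (p : ℕ) (hp : p.Prime) (hodd : Odd p) (y : ℤ)
    (hy : ¬ ∃ m : ℤ, y = m ^ p) :
    ¬ ∃ x : CyclotomicField p ℚ, (y : CyclotomicField p ℚ) = x ^ p :=
  not_pth_power_in_cyclotomic_general p hp y hy
end

section
/- Let K be a field whose characteristic does not divide d ≥ 2, let f(z) = z^d + c ∈ K[z], and let v be a non-archimedean valuation on K. If v(f^n(0)) > 0 for some n ≥ 1 (equivalently |f^n(0)| < 1), then v(f^{kn}(0)) = v(f^n(0)) for all k ≥ 1. -/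
theorem rigid_divisibility_one
    (K : Type*) [Field K] (d : ℕ) (hd : 2 ≤ d) (hchar : (d : K) ≠ 0)
    (c : K) (v : AbsoluteValue K ℝ) (hna : IsNonarchimedean v)
    (n : ℕ) (hn : 1 ≤ n) (hv : v ((fun z : K => z ^ d + c)^[n] 0) < 1) :
    ∀ k : ℕ, 1 ≤ k →
      v ((fun z : K => z ^ d + c)^[k * n] 0) = v ((fun z : K => z ^ d + c)^[n] 0) := by
  set f : K → K := fun z => z ^ d + c with hf
  -- nonarchimedean max equality
  have hmax : ∀ x y : K, v y < v x → v (x + y) = v x := by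
    intro x y h
    have h1 : v (x + y) ≤ v x := le_trans (hna x y) (max_le le_rfl h.le)
    have h2 : v x ≤ max (v (x + y)) (v y) := by
      have := hna (x + y) (-y)
      simpa using this
    rcases le_max_iff.mp h2 with h3 | h3
    · exact le_antisymm h1 h3
    · exact absurd h3 (not_le.mpr h)
  have hf0 : f 0 = c := by
    simp [hf, zero_pow (by omega : d ≠ 0)]
  -- |c| ≤ 1
  have hc : v c ≤ 1 := by
    by_contra hc1
    push_neg at hc1
    have key : ∀ m : ℕ, 1 ≤ m → v c ≤ v (f^[m] 0) := by
      intro m hm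
      induction m with
      | zero => omega
      | succ m ih =>
        rcases Nat.eq_or_lt_of_le hm with h | h
        · simp [← h, hf0]
        · have hm1 : 1 ≤ m := by omega
          have ihm := ih hm1
          have hx1 : 1 < v (f^[m] 0) := lt_of_lt_of_le hc1 ihm
          have hpow : v (f^[m] 0) < v ((f^[m] 0) ^ d) := by
            rw [map_pow]
            calc v (f^[m] 0) = v (f^[m] 0) ^ 1 := (pow_one _).symm
            _ < v (f^[m] 0) ^ d := by
                exact pow_lt_pow_right₀ hx1 (by omega)
          have hcs : v c < v ((f^[m] 0) ^ d) := lt_of_le_of_lt ihm hpow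
          have : v (f^[m+1] 0) = v ((f^[m] 0) ^ d) := by
            rw [Function.iterate_succ_apply']
            exact hmax _ _ hcs
          rw [this]
          exact le_of_lt hcs
    linarith [key n hn]
  -- ball invariance
  have hball : ∀ x : K, v x ≤ 1 → v (f x) ≤ 1 := by
    intro x hx
    refine le_trans (hna _ _) (max_le ?_ hc)
    rw [map_pow]
    exact pow_le_one₀ (v.nonneg x) hx
  have hiterball : ∀ m : ℕ, ∀ x : K, v x ≤ 1 → v (f^[m] x) ≤ 1 := by
    intro m
    induction m with
    | zero => intro x hx; simpa using hx
    | succ m ih =>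
      intro x hx
      rw [Function.iterate_succ_apply]
      exact ih _ (hball x hx)
  -- one-step 1-Lipschitz on ball
  have hsub : ∀ a b : K, v a ≤ 1 → v b ≤ 1 → v (f a - f b) ≤ v (a - b) := by
    intro a b ha hb
    have hab : f a - f b = a ^ d - b ^ d := by simp [hf]
    rw [hab]
    have hpow : ∀ m : ℕ, v (a ^ m - b ^ m) ≤ v (a - b) := by
      intro m
      induction m with
      | zero => simp [v.nonneg (a - b)]
      | succ m ih =>
        have hid : a ^ (m + 1) - b ^ (m + 1) = a * (a ^ m - b ^ m) + b ^ m * (a - b) := by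
          ring
        rw [hid]
        refine le_trans (hna _ _) (max_le ?_ ?_)
        · rw [map_mul]
          calc v a * v (a ^ m - b ^ m) ≤ 1 * v (a - b) := by
                exact mul_le_mul ha ih (v.nonneg _) zero_le_one
          _ = v (a - b) := one_mul _
        · rw [map_mul, map_pow]
          calc v b ^ m * v (a - b) ≤ 1 * v (a - b) := by
                exact mul_le_mul (pow_le_one₀ (v.nonneg b) hb) le_rfl (v.nonneg _) zero_le_one
          _ = v (a - b) := one_mul _
    exact hpow d
  -- iterated Lipschitz
  have hsubiter : ∀ m : ℕ, ∀ a b : K, v a ≤ 1 → v b ≤ 1 →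
      v (f^[m] a - f^[m] b) ≤ v (a - b) := by
    intro m
    induction m with
    | zero => intro a b _ _; simp
    | succ m ih =>
      intro a b ha hb
      rw [Function.iterate_succ_apply, Function.iterate_succ_apply]
      exact le_trans (ih _ _ (hball a ha) (hball b hb)) (hsub a b ha hb)
  -- the key step lemma: if v x = v (f^[n] 0) then v (f^[n] x) = v (f^[n] 0)
  set a : K := f^[n] 0 with ha
  have step : ∀ x : K, v x = v a → v (f^[n] x) = v a := by
    intro x hx
    rcases eq_or_lt_of_le (v.nonneg a) with h0 | h0
    · -- v a = 0, so a = 0 and x = 0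
      have hx0 : x = 0 := v.eq_zero.mp (by rw [hx, ← h0])
      rw [hx0]
    · -- 0 < v a
      have hx1 : v x ≤ 1 := by rw [hx]; exact le_of_lt hv
      have hdiff : v (f^[n] x - a) < v a := by
        have hn' : n = (n - 1) + 1 := by omega
        have e1 : f^[n] x = f^[n-1] (f x) := by
          conv_lhs => rw [hn']
          rw [Function.iterate_succ_apply]
        have e2 : a = f^[n-1] (f 0) := by
          rw [ha]
          conv_lhs => rw [hn']
          rw [Function.iterate_succ_apply]
        have hfx : f x - f 0 = x ^ d := by simp [hf, zero_pow (by omega : d ≠ 0)]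
        have hle : v (f^[n] x - a) ≤ v x ^ d := by
          have := hsubiter (n-1) (f x) (f 0) (hball x hx1) (hball 0 (by simp))
          rw [hfx, map_pow] at this
          rw [e1]
          conv_lhs => rw [e2]
          exact this
        refine lt_of_le_of_lt hle ?_
        rw [hx]
        calc v a ^ d < v a ^ 1 := by
              exact pow_lt_pow_right_of_lt_one₀ h0 hv (by omega)
        _ = v a := pow_one _
      have heq : a + (f^[n] x - a) = f^[n] x := by ring
      calc v (f^[n] x) = v (a + (f^[n] x - a)) := by rw [heq]
      _ = v a := hmax _ _ hdiff
  -- main induction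
  intro k hk
  induction k with
  | zero => omega
  | succ k ih =>
    rcases Nat.eq_or_lt_of_le hk with h | h
    · rw [← h, one_mul]
    · have hk1 : 1 ≤ k := by omega
      have ihk := ih hk1
      have e : f^[(k+1) * n] 0 = f^[n] (f^[k * n] 0) := by
        rw [show (k+1) * n = n + k * n by ring, Function.iterate_add_apply]
      rw [e]
      exact step _ ihk
end

section
/- Let K be a field, f(z) = z^d + c ∈ K[z] with d ≥ 2, and |·| a non-archimedean absolute value on K. If |f^n(0)| < 1 and |f^j(0)| < 1 for positive integers n, j, then |f^{gcd(n,j)}(0)| < 1. -/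
theorem rigid_divisibility_two
    (K : Type*) [Field K] (d : ℕ) (hd : 2 ≤ d) (c : K)
    (v : AbsoluteValue K ℝ) (hna : IsNonarchimedean v)
    (n j : ℕ) (hn : 1 ≤ n) (hj : 1 ≤ j)
    (hvn : v ((fun z : K => z ^ d + c)^[n] 0) < 1)
    (hvj : v ((fun z : K => z ^ d + c)^[j] 0) < 1) :
    v ((fun z : K => z ^ d + c)^[Nat.gcd n j] 0) < 1 := by
  set f : K → K := fun z => z ^ d + c with hf
  set a : ℕ → K := fun k => f^[k] 0 with ha
  have ha0 : a 0 = 0 := rfl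
  have hsucc : ∀ k, a (k + 1) = a k ^ d + c := by
    intro k
    simp only [ha, Function.iterate_succ_apply', hf]
  have ha1 : a 1 = c := by
    rw [hsucc 0, ha0, zero_pow (by omega), zero_add]
  -- Step 1 : v c ≤ 1
  have hc : v c ≤ 1 := by
    by_contra hc
    push_neg at hc
    have key : ∀ k, 1 ≤ k → v c ≤ v (a k) := by
      intro k hk
      induction k with
      | zero => omega
      | succ k ih =>
        rcases Nat.eq_or_lt_of_le hk with h | h
        · have hk0 : k = 0 := by omega
          subst hk0
          rw [ha1]
        · have hk1 : 1 ≤ k := by omega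
          have h1 : v c ≤ v (a k) := ih hk1
          have hgt1 : (1 : ℝ) < v (a k) := lt_of_lt_of_le hc h1
          have hpowgt : v c < v (a k ^ d) := by
            rw [map_pow]
            have h2 : v (a k) ^ 2 ≤ v (a k) ^ d :=
              pow_le_pow_right₀ hgt1.le hd
            have h3 : v (a k) < v (a k) ^ 2 := by
              nlinarith
            linarith
          -- v (x + c) ≥ v x when v c < v x
          rw [hsucc k]
          by_contra hle
          push_neg at hle
          have hb : v (a k ^ d) ≤ max (v (a k ^ d + c)) (v c) := by
            have h4 : a k ^ d = (a k ^ d + c) + (-c) := by ring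
            calc v (a k ^ d) = v ((a k ^ d + c) + (-c)) := by rw [← h4]
              _ ≤ max (v (a k ^ d + c)) (v (-c)) := hna _ _
              _ = max (v (a k ^ d + c)) (v c) := by rw [v.map_neg]
          have h5 : v (a k ^ d) ≤ v c := hb.trans (max_le hle.le le_rfl)
          linarith
    have hvn' : v (a n) < 1 := hvn
    have := key n hn
    linarith
  -- Step 2 : all iterates are in the closed unit ball
  have hball : ∀ k, v (a k) ≤ 1 := by
    intro k
    induction k with
    | zero => simp [ha0]
    | succ k ih =>
      rw [hsucc k]
      refine le_trans (hna _ _) (max_le ?_ hc)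
      rw [map_pow]
      exact pow_le_one₀ (v.nonneg _) ih
  -- Step 3 : x^m - y^m lemma
  have hpow : ∀ x y : K, v x ≤ 1 → v y ≤ 1 → ∀ m, v (x ^ m - y ^ m) ≤ v (x - y) := by
    intro x y hx hy m
    induction m with
    | zero => simp [v.nonneg]
    | succ m ih =>
      have hrw : x ^ (m + 1) - y ^ (m + 1) = x ^ m * (x - y) + y * (x ^ m - y ^ m) := by
        ring
      rw [hrw]
      refine le_trans (hna _ _) (max_le ?_ ?_)
      · rw [map_mul, map_pow]
        have h1 : v x ^ m ≤ 1 := pow_le_one₀ (v.nonneg x) hx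
        nlinarith [v.nonneg (x - y), v.nonneg x]
      · rw [map_mul]
        calc v y * v (x ^ m - y ^ m) ≤ 1 * v (x - y) :=
              mul_le_mul hy ih (v.nonneg _) one_pos.le
          _ = v (x - y) := one_mul _
  -- Step 4 : Lipschitz along the orbit
  have hlip : ∀ k m, v (a (m + k) - a m) ≤ v (a k) := by
    intro k m
    induction m with
    | zero => simpa [ha0] using le_refl (v (a k))
    | succ m ih =>
      have hrw : m + 1 + k = (m + k) + 1 := by omega
      rw [hrw, hsucc (m + k), hsucc m]
      have : a (m + k) ^ d + c - (a m ^ d + c) = a (m + k) ^ d - a m ^ d := by ring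
      rw [this]
      exact le_trans (hpow _ _ (hball _) (hball _) d) ih
  -- Step 5 : shifting back by k preserves being in the open ball
  have hshift : ∀ k m, v (a k) < 1 → v (a (m + k)) < 1 → v (a m) < 1 := by
    intro k m hk hmk
    have h1 : v (a m) ≤ max (v (a m - a (m + k))) (v (a (m + k))) := by
      have : a m = (a m - a (m + k)) + a (m + k) := by ring
      nth_rewrite 1 [this]
      exact hna _ _
    have h2 : v (a m - a (m + k)) = v (a (m + k) - a m) := v.map_sub _ _
    rcases max_cases (v (a m - a (m + k))) (v (a (m + k))) with ⟨he, _⟩ | ⟨he, _⟩ <;>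
      rw [he] at h1
    · rw [h2] at h1
      exact lt_of_le_of_lt (le_trans h1 (hlip k m)) hk
    · linarith
  have hmod : ∀ k q r, v (a k) < 1 → v (a (r + q * k)) < 1 → v (a r) < 1 := by
    intro k q
    induction q with
    | zero => intro r _ h; simpa using h
    | succ q ih =>
      intro r hk h
      have hrw : r + (q + 1) * k = (r + q * k) + k := by ring
      rw [hrw] at h
      exact ih r hk (hshift k (r + q * k) hk h)
  -- Step 6 : main claim by strong induction
  have main : ∀ n, ∀ j, 1 ≤ n → v (a n) < 1 → v (a j) < 1 → v (a (Nat.gcd n j)) < 1 := by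
    intro n
    induction n using Nat.strong_induction_on with
    | _ n IH =>
      intro j hn hvn hvj
      rcases eq_or_ne (j % n) 0 with h0 | h0
      · have hdvd : n ∣ j := Nat.dvd_of_mod_eq_zero h0
        rw [Nat.gcd_eq_left hdvd]
        exact hvn
      · rw [Nat.gcd_rec n j]
        have hlt : j % n < n := Nat.mod_lt _ (by omega)
        have hr : v (a (j % n)) < 1 := by
          have hjeq : j % n + (j / n) * n = j := Nat.mod_add_div' j n
          exact hmod n (j / n) (j % n) hvn (by rw [hjeq]; exact hvj)
        exact IH (j % n) hlt n (by omega) hr hvn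
  exact main n j hn hvn hvj
end

section
/- Let d ≥ 2, let L be a field of characteristic prime to d containing a primitive d-th root of unity ζ_d, and let a ∈ L be nonzero. If β is a root of z^d − a in an algebraic closure of L, and k is the least positive integer with β^k ∈ L, then k divides d, and the minimal polynomial of β over L is z^k − β^k. -/
/-!
The exponents `j` with `β ^ j ∈ L` form an additive group, generated by the least positive one `k`;
as `β ^ d = a ∈ L`, `k ∣ d`. The minimal polynomial `p` of `β` divides `X ^ k - b`, so `deg p ≤ k`.
Every root `r` of `p` is a root of `X ^ d - a`, hence `r / β` is a power of `ζ` and lies in `L`.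
The product of the `m = deg p` roots is `± p(0) ∈ L`, so `β ^ m ∈ L`, `k ∣ m`, and `m = k`.
-/

open Polynomial

section PowMem

variable {E : Type*} [Field E] (F : Subfield E) {β : E}

theorem Subfield.pow_mod_mem (hβ : β ≠ 0) {j k : ℕ} (hj : β ^ j ∈ F) (hk : β ^ k ∈ F) :
    β ^ (j % k) ∈ F := by
  have h : β ^ j = β ^ (j % k) * (β ^ k) ^ (j / k) := by
    rw [← pow_mul, ← pow_add, Nat.mod_add_div]
  have hk0 : (β ^ k) ^ (j / k) ≠ 0 := pow_ne_zero _ (pow_ne_zero _ hβ)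
  rw [← mul_inv_cancel_right₀ hk0 (β ^ (j % k)), ← h]
  exact F.mul_mem hj (F.inv_mem (F.pow_mem hk _))

theorem Subfield.dvd_of_pow_mem_of_minimal (hβ : β ≠ 0) {k : ℕ} (hk : 0 < k) (hβk : β ^ k ∈ F)
    (hmin : ∀ j, 0 < j → j < k → β ^ j ∉ F) {j : ℕ} (hj : β ^ j ∈ F) : k ∣ j :=
  Nat.dvd_of_mod_eq_zero <| by
    by_contra hne
    exact hmin _ (Nat.pos_of_ne_zero hne) (Nat.mod_lt _ hk) (F.pow_mod_mem hβ hj hβk)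

end PowMem

theorem IsPrimitiveRoot.div_mem_fieldRange_of_pow_eq {K E : Type*} [Field K] [Field E]
    [Algebra K E] {ζ : K} {d : ℕ} [NeZero d] (hζ : IsPrimitiveRoot ζ d) {x y : E} (hy : y ≠ 0)
    (hxy : x ^ d = y ^ d) : x / y ∈ (algebraMap K E).fieldRange := by
  have hone : (x / y) ^ d = 1 := by rw [div_pow, hxy, div_self (pow_ne_zero _ hy)]
  obtain ⟨i, -, hi⟩ := (hζ.map_of_injective (algebraMap K E).injective).eq_pow_of_pow_eq_one hone
  exact ⟨ζ ^ i, by rw [map_pow, hi]⟩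

theorem pow_eq_of_mem_roots_map_minpoly {K E : Type*} [Field K] [Field E] [Algebra K E]
    {β : E} {d : ℕ} {a : K} (hβ : β ^ d = algebraMap K E a) {r : E}
    (hr : r ∈ ((minpoly K β).map (algebraMap K E)).roots) : r ^ d = β ^ d := by
  have hdvd : minpoly K β ∣ X ^ d - C a := minpoly.dvd K β (by simp [hβ])
  have hr' := eval_eq_zero_of_dvd_of_eval_eq_zero (Polynomial.map_dvd _ hdvd)
    (isRoot_of_mem_roots hr)
  simp only [Polynomial.map_sub, Polynomial.map_pow, map_X, map_C, eval_sub, eval_pow, eval_X,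
    eval_C, sub_eq_zero] at hr'
  rw [hr', hβ]

theorem pow_natDegree_minpoly_mem_fieldRange {K E : Type*} [Field K] [Field E] [Algebra K E]
    {β : E} (hβ : β ≠ 0) (hint : IsIntegral K β)
    (hsplit : ((minpoly K β).map (algebraMap K E)).Splits)
    (hroots : ∀ r ∈ ((minpoly K β).map (algebraMap K E)).roots,
      r / β ∈ (algebraMap K E).fieldRange) :
    β ^ (minpoly K β).natDegree ∈ (algebraMap K E).fieldRange := by
  set F := (algebraMap K E).fieldRange
  set q := (minpoly K β).map (algebraMap K E)
  have hmonic : q.Monic := (minpoly.monic hint).map _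
  have hdeg : q.natDegree = (minpoly K β).natDegree := (minpoly.monic hint).natDegree_map _
  have hcoeff : q.coeff 0 = (-1) ^ q.natDegree * q.roots.prod :=
    hsplit.coeff_zero_eq_prod_roots_of_monic hmonic
  have hcoeff_mem : q.coeff 0 ∈ F := by rw [coeff_map]; exact ⟨_, rfl⟩
  have hcoeff_ne : q.coeff 0 ≠ 0 := by
    rw [coeff_map, map_ne_zero_iff _ (algebraMap K E).injective]
    exact minpoly.coeff_zero_ne_zero hint hβ
  have hprod_ne : q.roots.prod ≠ 0 := by
    rintro h; exact hcoeff_ne (by rw [hcoeff, h, mul_zero])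
  have hprod_mem : q.roots.prod ∈ F := by
    have : q.roots.prod = q.coeff 0 / (-1) ^ q.natDegree := by
      rw [hcoeff, mul_div_cancel_left₀ _ (by simp)]
    rw [this]
    exact F.div_mem hcoeff_mem (F.pow_mem (F.neg_mem F.one_mem) _)
  have hratio_mem : q.roots.prod / β ^ (minpoly K β).natDegree ∈ F := by
    have : (q.roots.map (· / β)).prod = q.roots.prod / β ^ (minpoly K β).natDegree := by
      rw [Multiset.prod_map_div, Multiset.map_id', Multiset.map_const', Multiset.prod_replicate,
        ← hsplit.natDegree_eq_card_roots, hdeg]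
    rw [← this]
    exact F.multiset_prod_mem _ fun x hx => by
      obtain ⟨r, hr, rfl⟩ := Multiset.mem_map.mp hx
      exact hroots r hr
  rw [← div_div_cancel₀ hprod_ne (b := β ^ _)]
  exact F.div_mem hprod_mem hratio_mem

theorem capelli_orbit_minpoly_general
    (L : Type*) [Field L] (d : ℕ) (hd : 2 ≤ d)
    (ζ : L) (hζ : IsPrimitiveRoot ζ d) (a : L) (ha : a ≠ 0)
    (β : AlgebraicClosure L) (hβ : β ^ d = algebraMap L (AlgebraicClosure L) a)
    (k : ℕ) (hk : 0 < k) (b : L) (hb : algebraMap L (AlgebraicClosure L) b = β ^ k)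
    (hmin : ∀ j : ℕ, 0 < j → j < k →
      ¬ ∃ b' : L, algebraMap L (AlgebraicClosure L) b' = β ^ j) :
    k ∣ d ∧ minpoly L β = X ^ k - C b := by
  have : NeZero d := ⟨by omega⟩
  set F := (algebraMap L (AlgebraicClosure L)).fieldRange
  have hβ0 : β ≠ 0 := by
    rintro rfl
    exact ha (by simpa [zero_pow (NeZero.ne d)] using hβ.symm)
  have hdvd_of_mem : ∀ {j}, β ^ j ∈ F → k ∣ j :=
    F.dvd_of_pow_mem_of_minimal hβ0 hk ⟨b, hb⟩ hmin
  have hint : IsIntegral L β := Algebra.IsIntegral.isIntegral β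
  have hdvd_k : minpoly L β ∣ X ^ k - C b := minpoly.dvd L β (by simp [hb])
  have hroots : ∀ r ∈ ((minpoly L β).map (algebraMap L _)).roots, r / β ∈ F := fun r hr =>
    hζ.div_mem_fieldRange_of_pow_eq hβ0 (pow_eq_of_mem_roots_map_minpoly hβ hr)
  have hk_dvd_deg : k ∣ (minpoly L β).natDegree := hdvd_of_mem <|
    pow_natDegree_minpoly_mem_fieldRange hβ0 hint (IsAlgClosed.splits _) hroots
  have hXk : (X ^ k - C b : L[X]).Monic := monic_X_pow_sub_C b hk.ne'
  refine ⟨hdvd_of_mem ⟨a, hβ.symm⟩, eq_of_monic_of_dvd_of_natDegree_le (minpoly.monic hint) hXk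
    hdvd_k ?_ |>.symm⟩
  rw [natDegree_X_pow_sub_C]
  exact Nat.le_of_dvd (minpoly.natDegree_pos hint) hk_dvd_deg

theorem capelli_orbit_minpoly
    (L : Type*) [Field L] (d : ℕ) (hd : 2 ≤ d) (hchar : (d : L) ≠ 0)
    (ζ : L) (hζ : IsPrimitiveRoot ζ d) (a : L) (ha : a ≠ 0)
    (β : AlgebraicClosure L) (hβ : β ^ d = algebraMap L (AlgebraicClosure L) a)
    (k : ℕ) (hk : 0 < k) (b : L) (hb : algebraMap L (AlgebraicClosure L) b = β ^ k)
    (hmin : ∀ j : ℕ, 0 < j → j < k →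
      ¬ ∃ b' : L, algebraMap L (AlgebraicClosure L) b' = β ^ j) :
    k ∣ d ∧ minpoly L β = X ^ k - C b :=
  capelli_orbit_minpoly_general L d hd ζ hζ a ha β hβ k hk b hb hmin
end

section
/- For all integers d ≥ 2 and t ≥ 1, the quantity C(dt, t) · ((d−1)/d)^{dt} · (d−1)^{−t} is at most 1/2, with equality at d = 2, t = 1. -/
-- key natural number inequality: twice the mode term of the binomial
-- expansion of (c+1)^(ct+t) is at most the whole sum.
lemma martingale_key_nat (c t : ℕ) (hc : 1 ≤ c) (ht : 1 ≤ t) :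
    2 * (Nat.choose (c * t + t) (c * t) * c ^ (c * t)) ≤ (c + 1) ^ (c * t + t) := by
  have hct : 1 ≤ c * t := Nat.one_le_iff_ne_zero.2 (by positivity)
  obtain ⟨m, hm⟩ : ∃ m, c * t = m + 1 := ⟨c * t - 1, by omega⟩
  rw [hm]
  set n := m + 1 + t with hn
  have h2 : Nat.choose n (m + 1) * (m + 1) = Nat.choose n m * (t + 1) := by
    rw [Nat.choose_succ_right_eq]
    congr 1
    omega
  have h1 : Nat.choose n (m + 2) * (m + 2) = Nat.choose n (m + 1) * t := by
    have h := Nat.choose_succ_right_eq n (m + 1)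
    have e : n - (m + 1) = t := by omega
    rw [e] at h
    exact h
  have hkey : c * ((m + 2) * (t + 1)) ≤ (m + 1) * (m + 2) + t * (c * c) * (t + 1) := by
    have e1 : m + 2 = m + 1 + 1 := rfl
    rw [e1, ← hm]
    have h3 : 1 * 1 * 1 ≤ c * t * t := by
      apply Nat.mul_le_mul (Nat.mul_le_mul hc ht) ht
    nlinarith [h3, hc, ht]
  have step : Nat.choose n (m + 1) * c ^ (m + 1) ≤
      Nat.choose n m * c ^ m + Nat.choose n (m + 2) * c ^ (m + 2) := by
    have hM : 0 < (m + 2) * (t + 1) * c := by positivity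
    apply Nat.le_of_mul_le_mul_right _ hM
    calc Nat.choose n (m + 1) * c ^ (m + 1) * ((m + 2) * (t + 1) * c)
        = (Nat.choose n (m + 1) * c ^ (m + 1)) * (c * ((m + 2) * (t + 1))) := by ring
      _ ≤ (Nat.choose n (m + 1) * c ^ (m + 1)) *
            ((m + 1) * (m + 2) + t * (c * c) * (t + 1)) :=
          Nat.mul_le_mul_left _ hkey
      _ = (Nat.choose n (m + 1) * (m + 1)) * c ^ (m + 1) * (m + 2)
            + (Nat.choose n (m + 1) * t) * (c ^ (m + 1) * c * c) * (t + 1) := by ring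
      _ = (Nat.choose n m * (t + 1)) * c ^ (m + 1) * (m + 2)
            + (Nat.choose n (m + 2) * (m + 2)) * (c ^ (m + 1) * c * c) * (t + 1) := by
          rw [← h1, ← h2]
      _ = (Nat.choose n m * c ^ m + Nat.choose n (m + 2) * c ^ (m + 2)) *
            ((m + 2) * (t + 1) * c) := by ring
  have hsum : (c + 1) ^ n = ∑ j ∈ Finset.range (n + 1), Nat.choose n j * c ^ j := by
    have h := add_pow c 1 n
    simpa [mul_comm] using h
  have hsub : ({m, m + 1, m + 2} : Finset ℕ) ⊆ Finset.range (n + 1) := by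
    intro x hx
    simp only [Finset.mem_insert, Finset.mem_singleton] at hx
    simp only [Finset.mem_range]
    omega
  have hthree : ∑ j ∈ ({m, m + 1, m + 2} : Finset ℕ), Nat.choose n j * c ^ j
      ≤ ∑ j ∈ Finset.range (n + 1), Nat.choose n j * c ^ j :=
    Finset.sum_le_sum_of_subset hsub
  have hexp : ∑ j ∈ ({m, m + 1, m + 2} : Finset ℕ), Nat.choose n j * c ^ j
      = Nat.choose n m * c ^ m + Nat.choose n (m + 1) * c ^ (m + 1)
        + Nat.choose n (m + 2) * c ^ (m + 2) := by
    rw [Finset.sum_insert (by simp), Finset.sum_insert (by simp), Finset.sum_singleton]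
    ring
  calc 2 * (Nat.choose n (m + 1) * c ^ (m + 1))
      = Nat.choose n (m + 1) * c ^ (m + 1) + Nat.choose n (m + 1) * c ^ (m + 1) := by ring
    _ ≤ Nat.choose n (m + 1) * c ^ (m + 1)
          + (Nat.choose n m * c ^ m + Nat.choose n (m + 2) * c ^ (m + 2)) :=
        Nat.add_le_add_left step _
    _ = ∑ j ∈ ({m, m + 1, m + 2} : Finset ℕ), Nat.choose n j * c ^ j := by
        rw [hexp]; ring
    _ ≤ ∑ j ∈ Finset.range (n + 1), Nat.choose n j * c ^ j := hthree
    _ = (c + 1) ^ n := hsum.symm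

theorem martingale_probability_bound (d t : ℕ) (hd : 2 ≤ d) (ht : 1 ≤ t) :
    (Nat.choose (d * t) t : ℝ) * (((d : ℝ) - 1) / d) ^ (d * t) * ((d : ℝ) - 1) ^ (-(t : ℤ)) ≤ 1 / 2 ∧
    (d = 2 → t = 1 →
      (Nat.choose (d * t) t : ℝ) * (((d : ℝ) - 1) / d) ^ (d * t) * ((d : ℝ) - 1) ^ (-(t : ℤ)) = 1 / 2) := by
  have hcd : (d - 1) + 1 = d := by omega
  set c := d - 1 with hcdef
  have hc : 1 ≤ c := by omega
  have hdt : d * t = c * t + t := by rw [← hcd]; ring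
  have key := martingale_key_nat c t hc ht
  rw [← hdt, hcd] at key
  -- key : 2 * ((d*t).choose (c*t) * c ^ (c*t)) ≤ d ^ (d*t)
  have hdR : (0:ℝ) < d := by positivity
  have hcR : ((d:ℝ) - 1) = (c:ℝ) := by
    have h : ((c:ℝ) + 1) = (d:ℝ) := by exact_mod_cast congrArg (Nat.cast (R := ℝ)) hcd
    linarith
  have hcRpos : (0:ℝ) < c := by exact_mod_cast hc
  have htn : t ≤ d * t := Nat.le_mul_of_pos_left t (by omega)
  have hchoose : Nat.choose (d * t) t = Nat.choose (d * t) (c * t) := by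
    have h1 : d * t - t = c * t := by rw [hdt]; omega
    rw [← h1, Nat.choose_symm htn]
  have hexpr : (Nat.choose (d * t) t : ℝ) * (((d : ℝ) - 1) / d) ^ (d * t) *
      ((d : ℝ) - 1) ^ (-(t : ℤ))
      = ((Nat.choose (d * t) (c * t) * c ^ (c * t) : ℕ) : ℝ) / ((d ^ (d * t) : ℕ) : ℝ) := by
    rw [hcR, hchoose, zpow_neg, zpow_natCast, div_pow]
    push_cast
    rw [hdt, pow_add]
    have hcpow : (0:ℝ) < (c:ℝ) ^ t := by positivity
    field_simp
  refine ⟨?_, ?_⟩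
  · rw [hexpr]
    rw [div_le_div_iff₀ (by positivity) (by norm_num : (0:ℝ) < 2)]
    have hkeyR : ((2 * (Nat.choose (d * t) (c * t) * c ^ (c * t)) : ℕ) : ℝ)
        ≤ ((d ^ (d * t) : ℕ) : ℝ) := by exact_mod_cast key
    push_cast at hkeyR ⊢
    linarith
  · intro hd2 ht1
    subst hd2; subst ht1
    norm_num
end

section
/- Let p be an odd prime and r ≥ 2 an integer. Then the norm N(r^p + rζ_p) from ℚ(ζ_p) to ℚ is not a p-th power in ℤ. -/
theorem norm_not_pth_power (p : ℕ) (hp : p.Prime) (hodd : Odd p) (r : ℤ) (hr : 2 ≤ r) :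
    ¬ ∃ m : ℤ, ∑ i ∈ Finset.range p, (-1 : ℤ) ^ i * r ^ i * (r ^ p) ^ (p - 1 - i) = m ^ p := by
  rintro ⟨m, hm⟩
  set a : ℤ := r ^ (p - 1) with ha
  have hp2 : 2 ≤ p := hp.two_le
  have ha2 : 2 ≤ a := by
    have : r ≤ r ^ (p - 1) := le_self_pow₀ (by linarith) (by omega)
    linarith
  set G : ℤ := ∑ i ∈ Finset.range p, (-1 : ℤ) ^ i * a ^ (p - 1 - i) with hG
  have hsum : ∑ i ∈ Finset.range p, (-1 : ℤ) ^ i * r ^ i * (r ^ p) ^ (p - 1 - i)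
      = a * G := by
    rw [hG, Finset.mul_sum]
    apply Finset.sum_congr rfl
    intro i hi
    rw [Finset.mem_range] at hi
    obtain ⟨j, hj⟩ : ∃ j, p = i + j + 1 := ⟨p - 1 - i, by omega⟩
    subst hj
    have h1 : i + j + 1 - 1 - i = j := by omega
    have h2 : i + j + 1 - 1 = i + j := by omega
    rw [h1, ha, h2]
    ring
  have hg : G * (-1 - a) = (-1 : ℤ) ^ p - a ^ p := geom_sum₂_mul (-1) a p
  rw [hodd.neg_one_pow] at hg
  have hGa : (1 + a) * G = 1 + a ^ p := by linarith [hg]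
  set B : ℤ := a ^ (p - 1) with hB
  have hab : a ^ p = a * B := by
    rw [hB, ← pow_succ']
    congr 1
    omega
  have hBa : a ≤ B := by
    rw [hB]; exact le_self_pow₀ (by linarith) (by omega)
  have hkey : (1 + a) * m ^ p = a + a ^ 2 * B := by
    have : (1 + a) * m ^ p = a * ((1 + a) * G) := by
      rw [← hm, hsum]; ring
    rw [hGa, hab] at this
    linarith [this]
  have h1a : (0:ℤ) < 1 + a := by linarith
  -- m^p < a^p
  have hub : m ^ p < a ^ p := by
    have : (1 + a) * m ^ p < (1 + a) * (a * B) := by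
      rw [hkey]; nlinarith
    rw [← hab] at this
    exact lt_of_mul_lt_mul_left this (by linarith)
  -- (a-1) * B < m^p
  have hlb : (a - 1) * B < m ^ p := by
    have hBpos : 0 < B := by linarith
    have : (1 + a) * ((a - 1) * B) < (1 + a) * m ^ p := by
      rw [hkey]; nlinarith
    exact lt_of_mul_lt_mul_left this (by linarith)
  have hlb2 : (a - 1) ^ p ≤ (a - 1) * B := by
    have h1 : (a - 1) ^ p = (a - 1) ^ (p - 1) * (a - 1) := by
      rw [← pow_succ]; congr 1; omega
    have h2 : (a - 1) ^ (p - 1) ≤ a ^ (p - 1) :=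
      pow_le_pow_left₀ (by linarith) (by linarith) _
    rw [h1, hB]
    nlinarith [pow_nonneg (show (0:ℤ) ≤ a - 1 by linarith) (p - 1)]
  clear_value a
  have hmpos : 0 < m ^ p := lt_of_le_of_lt (pow_nonneg (by linarith) p) (lt_of_le_of_lt hlb2 hlb)
  have hm0 : 0 ≤ m := le_of_lt (hodd.pow_pos_iff.mp hmpos)
  have hm1 : a - 1 < m := lt_of_pow_lt_pow_left₀ p hm0 (lt_of_le_of_lt hlb2 hlb)
  have hm2 : m < a := lt_of_pow_lt_pow_left₀ p (by linarith) hub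
  omega
end

section
/- Let p be an odd prime and f(z) = z^p + r^p with r a positive integer. Then for all n ≥ 2, the integer f^{n−1}(0) + r is not a p-th power in ℤ. -/
lemma aux_pow_ineq (p : ℕ) (a : ℤ) (ha : 0 ≤ a) :
    a ^ p + p * a ^ (p - 1) ≤ (a + 1) ^ p := by
  induction p with
  | zero => simp
  | succ p ih =>
    rcases Nat.eq_zero_or_pos p with h | h
    · subst h; simp
    · have hstep : (a ^ p + p * a ^ (p - 1)) * (a + 1) ≤ (a + 1) ^ (p + 1) := by
        rw [pow_succ]
        exact mul_le_mul_of_nonneg_right ih (by linarith)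
      refine le_trans ?_ hstep
      have hpa : a ^ (p - 1) * a = a ^ p := by
        rw [← pow_succ]; congr 1; omega
      have h1 : a ^ (p + 1 - 1) = a ^ p := by congr 1
      have h2 : (0:ℤ) ≤ a ^ (p - 1) := pow_nonneg ha _
      have h3 : (0:ℤ) ≤ a ^ p := pow_nonneg ha _
      push_cast
      have hps : a ^ (p + 1) = a ^ p * a := pow_succ a p
      have hq : (0:ℤ) ≤ (p:ℤ) := Int.natCast_nonneg p
      nlinarith [hpa, h2, h3, hps, hq]

theorem orbit_plus_r_not_pth_power (p : ℕ) (hp : p.Prime) (hodd : Odd p)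
    (r : ℤ) (hr : 0 < r) (n : ℕ) (hn : 2 ≤ n) :
    ¬ ∃ m : ℤ, (fun z : ℤ => z ^ p + r ^ p)^[n - 1] 0 + r = m ^ p := by
  set f : ℤ → ℤ := fun z : ℤ => z ^ p + r ^ p with hf
  have hp3 : 3 ≤ p := by
    have := hp.two_le
    have := Nat.odd_iff.mp hodd
    omega
  have hrp : (0:ℤ) < r ^ p := pow_pos hr p
  have hnonneg : ∀ j, 0 ≤ f^[j] 0 := by
    intro j
    induction j with
    | zero => simp
    | succ j ih =>
      rw [Function.iterate_succ_apply']
      have : (0:ℤ) ≤ (f^[j] 0) ^ p := pow_nonneg ih p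
      simp only [hf]; linarith
  rintro ⟨m, hm⟩
  -- write n - 1 = j + 1
  obtain ⟨j, hj⟩ : ∃ j, n - 1 = j + 1 := ⟨n - 2, by omega⟩
  rw [hj, Function.iterate_succ_apply'] at hm
  set a : ℤ := f^[j] 0 with hA
  have ha0 : 0 ≤ a := hnonneg j
  have hm' : a ^ p + r ^ p + r = m ^ p := by
    simpa [hf] using hm
  have key : ∀ c : ℤ, 0 ≤ c → c ^ p < m ^ p → m ^ p < (c + 1) ^ p → False := by
    intro c hc h1 h2
    have mono := (Odd.strictMono_pow (R := ℤ) hodd)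
    have l1 : c < m := mono.lt_iff_lt.mp h1
    have l2 : m < c + 1 := mono.lt_iff_lt.mp h2
    omega
  rcases Nat.eq_zero_or_pos j with hj0 | hj1
  · -- n = 2 case: a = 0, m^p = r^p + r
    have ha : a = 0 := by simp [hA, hj0]
    rw [ha, zero_pow (by omega : p ≠ 0)] at hm'
    have hv : r ^ p + r = m ^ p := by linarith
    refine key r hr.le (by omega) ?_
    have hb := aux_pow_ineq p r hr.le
    have hrr : r ≤ r ^ (p - 1) := le_self_pow₀ (by omega) (by omega)
    have : (p:ℤ) * r ^ (p - 1) ≥ 3 * r := by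
      have : (3:ℤ) ≤ (p:ℤ) := by exact_mod_cast hp3
      nlinarith
    nlinarith
  · -- j ≥ 1 : a ≥ r^p
    have haR : r ^ p ≤ a := by
      obtain ⟨i, hi⟩ : ∃ i, j = i + 1 := ⟨j - 1, by omega⟩
      have : a = (f^[i] 0) ^ p + r ^ p := by
        rw [hA, hi, Function.iterate_succ_apply']
      have h2 : (0:ℤ) ≤ (f^[i] 0) ^ p := pow_nonneg (hnonneg i) p
      linarith
    refine key a ha0 (by nlinarith) ?_
    have hb := aux_pow_ineq p a ha0
    have ha1 : 1 ≤ a := by nlinarith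
    have haa : a ≤ a ^ (p - 1) := le_self_pow₀ ha1 (by omega)
    have hp3' : (3:ℤ) ≤ (p:ℤ) := by exact_mod_cast hp3
    have : (p:ℤ) * a ^ (p - 1) ≥ 3 * a := by nlinarith
    have hra : r ≤ a := le_trans (le_self_pow₀ (by omega) (by omega : p ≠ 0)) haR
    nlinarith
end

section
/- Let K be a field of characteristic not dividing d, let f(z) = z^d + c and let g ∈ K[z] be monic, irreducible, and separable with α a root of the irreducible separable polynomial g∘f^N over K. Then the norm from K(α) to K of α − c equals (−1)^{deg(g∘f^N)} · g(f^{N+1}(0)). -/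
open Polynomial

noncomputable def iteratePoly (K : Type*) [Field K] (d : ℕ) (c : K) : ℕ → Polynomial K :=
  fun n => (fun q : Polynomial K => q.comp (X ^ d + C c))^[n] X

lemma iteratePoly_succ (K : Type*) [Field K] (d : ℕ) (c : K) (n : ℕ) :
    iteratePoly K d c (n + 1) = (iteratePoly K d c n).comp (X ^ d + C c) :=
  Function.iterate_succ_apply' _ _ _

lemma iteratePoly_eval (K : Type*) [Field K] (d : ℕ) (c : K) :
    ∀ n (a : K), (iteratePoly K d c n).eval a = (fun z : K => z ^ d + c)^[n] a
  | 0, a => by simp [iteratePoly]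
  | (n + 1), a => by
    rw [Function.iterate_succ_apply, iteratePoly_succ, eval_comp]
    simp [iteratePoly_eval K d c n]

lemma iteratePoly_monic (K : Type*) [Field K] (d : ℕ) (hd : 2 ≤ d) (c : K) :
    ∀ n, (iteratePoly K d c n).Monic ∧ (iteratePoly K d c n).natDegree = d ^ n
  | 0 => by simp [iteratePoly, monic_X]
  | (n + 1) => by
    obtain ⟨hm, hdeg⟩ := iteratePoly_monic K d hd c n
    have hXd : (X ^ d + C c : Polynomial K).Monic := monic_X_pow_add_C c (by omega)
    have hXdeg : (X ^ d + C c : Polynomial K).natDegree = d := by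
      rw [natDegree_X_pow_add_C]
    constructor
    · rw [iteratePoly_succ]
      exact hm.comp hXd (by rw [hXdeg]; omega)
    · rw [iteratePoly_succ, natDegree_comp, hdeg, hXdeg, pow_succ]

theorem norm_of_root_sub_c
    (K : Type*) [Field K] (d : ℕ) (hd : 2 ≤ d) (hchar : (d : K) ≠ 0) (c : K)
    (g : Polynomial K) (hg : g.Monic) (hgi : Irreducible g) (hgs : g.Separable)
    (N : ℕ)
    (hirr : Irreducible (g.comp (iteratePoly K d c N)))
    (hsep : (g.comp (iteratePoly K d c N)).Separable) :
    Algebra.norm K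
        (AdjoinRoot.root (g.comp (iteratePoly K d c N)) -
          algebraMap K (AdjoinRoot (g.comp (iteratePoly K d c N))) c) =
      (-1) ^ (g.comp (iteratePoly K d c N)).natDegree *
        g.eval ((fun z : K => z ^ d + c)^[N + 1] 0) := by
  set P := g.comp (iteratePoly K d c N) with hPdef
  obtain ⟨hitm, hitdeg⟩ := iteratePoly_monic K d hd c N
  have hitdeg0 : (iteratePoly K d c N).natDegree ≠ 0 := by
    rw [hitdeg]; positivity
  have hPm : P.Monic := hg.comp hitm hitdeg0
  haveI : Fact (Irreducible P) := ⟨hirr⟩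
  have hP0 : P ≠ 0 := hirr.ne_zero
  set L := AdjoinRoot P with hLdef
  set α := AdjoinRoot.root P with hαdef
  let pbL := AdjoinRoot.powerBasis hP0
  haveI : FiniteDimensional K L := pbL.finite
  set x : L := α - algebraMap K L c with hxdef
  have hxint : IsIntegral K x := IsIntegral.of_finite K x
  set Q := P.comp (X + C c) with hQdef
  have hQm : Q.Monic := hPm.comp (monic_X_add_C c) (by simp)
  have hQdeg : Q.natDegree = P.natDegree := by simp [hQdef, natDegree_comp]
  have hroot : Polynomial.aeval x Q = 0 := by
    rw [hQdef, aeval_comp]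
    have hx : Polynomial.aeval x (X + C c) = α := by simp [hxdef]
    rw [hx, AdjoinRoot.aeval_eq, AdjoinRoot.mk_self]
  have hdvd : minpoly K x ∣ Q := minpoly.dvd K x hroot
  -- K⟮x⟯ = ⊤
  have hαmem : α ∈ IntermediateField.adjoin K ({x} : Set L) := by
    have hx : x ∈ IntermediateField.adjoin K ({x} : Set L) :=
      IntermediateField.mem_adjoin_simple_self K x
    have := add_mem hx ((IntermediateField.adjoin K ({x} : Set L)).algebraMap_mem c)
    simpa [hxdef] using this
  have htop : IntermediateField.adjoin K ({x} : Set L) = ⊤ := by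
    rw [eq_top_iff, ← IntermediateField.adjoin_root_eq_top P]
    exact IntermediateField.adjoin_le_iff.mpr (Set.singleton_subset_iff.mpr hαmem)
  -- degree of minpoly
  have hfinL : Module.finrank K L = P.natDegree := by
    rw [pbL.finrank]
    simp [pbL]
  have hmindeg : (minpoly K x).natDegree = P.natDegree := by
    rw [← IntermediateField.adjoin.finrank hxint, htop, ← hfinL]
    exact (IntermediateField.topEquiv (F := K) (E := L)).toLinearEquiv.finrank_eq
  have hmin : minpoly K x = Q :=
    (eq_of_monic_of_dvd_of_natDegree_le (minpoly.monic hxint) hQm hdvd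
      (by rw [hQdeg, hmindeg])).symm
  -- power basis of L with generator x
  let e : (IntermediateField.adjoin K ({x} : Set L)) ≃ₐ[K] L :=
    (IntermediateField.equivOfEq htop).trans IntermediateField.topEquiv
  let pb := (IntermediateField.adjoin.powerBasis hxint).map e
  have hgen : pb.gen = x := rfl
  have hnorm := Algebra.PowerBasis.norm_gen_eq_coeff_zero_minpoly pb
  rw [hgen] at hnorm
  have hdim : pb.dim = P.natDegree := by
    show (minpoly K x).natDegree = P.natDegree
    exact hmindeg
  rw [hnorm, hdim, hmin]
  have h0 : (fun z : K => z ^ d + c)^[N + 1] 0 = (fun z : K => z ^ d + c)^[N] c := by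
    rw [Function.iterate_succ_apply]
    congr 1
    show (0 : K) ^ d + c = c
    rw [zero_pow (by omega : d ≠ 0), zero_add]
  congr 1
  rw [coeff_zero_eq_eval_zero, hQdef, eval_comp]
  simp only [eval_add, eval_X, eval_C, zero_add]
  rw [hPdef, eval_comp, iteratePoly_eval, h0]
end
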